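/- arXiv:2604.12589 — 3 statements merged into one kernel-verified Lean document; each statement's English description precedes it below -/
import Mathlib

section
/- Let G be a connected compact metric graph with exponents p̄ = (p_e), 1 < p_e < ∞. There exists a constant λ_G > 0 such that for every u ∈ W^{1,p̄}(G) with Σ_{e∈E} ∫₀^{ℓ_e} u_e = 0 one has λ_G · Σ_{e∈E} ( ∫₀^{ℓ_e} |u_e|^{p_e} )^{1/p_e} ≤ Σ_{e∈E} ( ∫₀^{ℓ_e} |u_e'|^{p_e} )^{1/p_e} (Poincaré inequality on a compact metric graph). -/
open MeasureTheory Set Filter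

noncomputable section

/-- A connected compact metric graph: finite nonempty vertex set, finite edge set,
initial/terminal vertex maps without loops, positive edge lengths, no multiple edges,
and connectedness via paths of edges. -/
structure MetricGraph where
  V : Type
  E : Type
  fintypeV : Fintype V
  fintypeE : Fintype E
  nonemptyV : Nonempty V
  ι : E → V
  τ : E → V
  no_loops : ∀ e, ι e ≠ τ e
  len : E → ℝ
  len_pos : ∀ e, 0 < len e
  no_multi : ∀ e e', ({ι e, τ e} : Set V) = ({ι e', τ e'} : Set V) → e = e'
  connected : ∀ v w : V,
    Relation.ReflTransGen (fun a b => ∃ e, (ι e = a ∧ τ e = b) ∨ (ι e = b ∧ τ e = a)) v w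

/-- Sum over the edges of the graph. -/
def edgeSum (G : MetricGraph) (F : G.E → ℝ) : ℝ :=
  letI := G.fintypeE
  ∑ e, F e

/-- Sum over the vertices of the graph. -/
def vertexSum (G : MetricGraph) (F : G.V → ℝ) : ℝ :=
  letI := G.fintypeV
  ∑ v, F v

/-- Number of vertices. -/
def vertexCard (G : MetricGraph) : ℕ :=
  letI := G.fintypeV
  Fintype.card G.V

/-- ρ_p(r) = |r|^(p-2) r. -/
def rho (p r : ℝ) : ℝ := |r| ^ (p - 2) * r

/-- `(u, u')` is in the Sobolev space W^{1,p}(0,ℓ): `u'` is integrable with `|u'|^p`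
integrable on (0,ℓ), and `u` is absolutely continuous on [0,ℓ] with derivative `u'`. -/
def IntervalSobolev (ℓ p : ℝ) (u u' : ℝ → ℝ) : Prop :=
  IntegrableOn u' (Ioo 0 ℓ) volume ∧
  IntegrableOn (fun x => |u' x| ^ p) (Ioo 0 ℓ) volume ∧
  ∀ x ∈ Icc (0:ℝ) ℓ, u x = u 0 + ∫ t in (0:ℝ)..x, u' t

/-- `(u, u')` is in W^{1,p̄}(G), continuous at the vertices with vertex values `uV`. -/
def GraphSobolev (G : MetricGraph) (p : G.E → ℝ) (u u' : G.E → ℝ → ℝ) (uV : G.V → ℝ) : Prop :=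
  (∀ e, IntervalSobolev (G.len e) (p e) (u e) (u' e)) ∧
  (∀ e, u e 0 = uV (G.ι e)) ∧
  (∀ e, u e (G.len e) = uV (G.τ e))

/-- `v` is a weak solution of the graph problem (P_ω^f) with data `u, u', uV`. -/
def SolvesGraphProblem (G : MetricGraph) (p : G.E → ℝ) (γ : G.E → ℝ → ℝ)
    (f : G.E → ℝ → ℝ) (ω : G.V → ℝ)
    (v : G.E → ℝ → ℝ) (u u' : G.E → ℝ → ℝ) (uV : G.V → ℝ) : Prop :=
  (∀ e, IntegrableOn (v e) (Ioo 0 (G.len e)) volume) ∧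
  GraphSobolev G p u u' uV ∧
  (∀ e, ∀ᵐ x ∂(volume.restrict (Ioo 0 (G.len e))), v e x = γ e (u e x)) ∧
  ∀ φ φ' : G.E → ℝ → ℝ, ∀ φV : G.V → ℝ, GraphSobolev G p φ φ' φV →
    edgeSum G (fun e => ∫ x in Ioo 0 (G.len e), v e x * φ e x)
      + edgeSum G (fun e => ∫ x in Ioo 0 (G.len e), rho (p e) (u' e x) * φ' e x)
    = edgeSum G (fun e => ∫ x in Ioo 0 (G.len e), f e x * φ e x)
      + vertexSum G (fun w => ω w * φV w)

/-- `v` is a weak solution of the graph problem (P_ω^f). -/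
def IsGraphWeakSolution (G : MetricGraph) (p : G.E → ℝ) (γ : G.E → ℝ → ℝ)
    (f : G.E → ℝ → ℝ) (ω : G.V → ℝ) (v : G.E → ℝ → ℝ) : Prop :=
  ∃ u u' uV, SolvesGraphProblem G p γ f ω v u u' uV

/-- `v` is a weak solution of the interval Neumann problem (P^{γ,f}_{p,a,b}),
with associated Sobolev function `u` (derivative `u'`). -/
def SolvesNeumann (ℓ p : ℝ) (γ f : ℝ → ℝ) (a b : ℝ) (v u u' : ℝ → ℝ) : Prop :=
  IntegrableOn v (Ioo 0 ℓ) volume ∧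
  IntervalSobolev ℓ p u u' ∧
  (∀ᵐ x ∂(volume.restrict (Ioo 0 ℓ)), v x = γ (u x)) ∧
  ∀ φ φ' : ℝ → ℝ, IntervalSobolev ℓ p φ φ' →
    (∫ x in Ioo 0 ℓ, v x * φ x) + (∫ x in Ioo 0 ℓ, rho p (u' x) * φ' x)
    = (∫ x in Ioo 0 ℓ, f x * φ x) + a * φ 0 + b * φ ℓ

/-- `v` is a weak solution of the interval Neumann problem (P^{γ,f}_{p,a,b}). -/
def IsNeumannWeakSolution (ℓ p : ℝ) (γ f : ℝ → ℝ) (a b : ℝ) (v : ℝ → ℝ) : Prop :=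
  ∃ u u', SolvesNeumann ℓ p γ f a b v u u'

end

/-! On each edge a Sobolev function moves by at most the `L¹` norm `D` of its derivative, and so
do the vertex values along a path of edges; hence all of `u` lies within `C · D` of one vertex
value `c`, with `C` depending only on the graph. Integrating over the graph, the mean-zero
condition forces `|c| ≤ C · D`, so `|u| ≤ 2 C · D` everywhere. It remains to compare norms edge by
edge: `‖u_e‖_{p_e} ≤ ℓ_e^{1/p_e} sup |u|`, and by Hölder `D ≤ Σ_e ℓ_e^{1 - 1/p_e} ‖u_e'‖_{p_e}`. -/

noncomputable def intervalLpNorm (ℓ p : ℝ) (f : ℝ → ℝ) : ℝ := (∫ x in Ioo 0 ℓ, |f x| ^ p) ^ (1 / p)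

section IntervalEstimates

variable {ℓ p : ℝ} {f : ℝ → ℝ}

lemma intervalLpNorm_nonneg : 0 ≤ intervalLpNorm ℓ p f :=
  Real.rpow_nonneg (setIntegral_nonneg measurableSet_Ioo fun _ _ => by positivity) _

lemma intervalLpNorm_le_of_abs_le (hℓ : 0 ≤ ℓ) (hp : 0 < p)
    (hf : AEStronglyMeasurable f (volume.restrict (Ioo 0 ℓ))) {C : ℝ} (hC : 0 ≤ C)
    (hfC : ∀ x ∈ Ioo 0 ℓ, |f x| ≤ C) :
    intervalLpNorm ℓ p f ≤ ℓ ^ (1 / p) * C := by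
  have hpow : ∀ x ∈ Ioo 0 ℓ, |f x| ^ p ≤ C ^ p := fun x hx =>
    Real.rpow_le_rpow (abs_nonneg _) (hfC x hx) hp.le
  have hint : IntegrableOn (fun x => |f x| ^ p) (Ioo 0 ℓ) := by
    refine Integrable.mono' (g := fun _ => C ^ p) (integrableOn_const measure_Ioo_lt_top.ne) ?_
      ((ae_restrict_iff' measurableSet_Ioo).mpr (Eventually.of_forall fun x hx => ?_))
    · exact (continuous_abs.rpow_const fun _ => Or.inr hp.le).comp_aestronglyMeasurable hf
    · rw [Real.norm_of_nonneg (by positivity)]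
      exact hpow x hx
  have hbound : ∫ x in Ioo 0 ℓ, |f x| ^ p ≤ ℓ * C ^ p := by
    calc ∫ x in Ioo 0 ℓ, |f x| ^ p ≤ ∫ _ in Ioo 0 ℓ, C ^ p :=
          setIntegral_mono_on hint (integrableOn_const measure_Ioo_lt_top.ne)
            measurableSet_Ioo hpow
      _ = ℓ * C ^ p := by rw [setIntegral_const, Real.volume_real_Ioo_of_le hℓ, sub_zero, smul_eq_mul]
  calc intervalLpNorm ℓ p f ≤ (ℓ * C ^ p) ^ (1 / p) :=
        Real.rpow_le_rpow (setIntegral_nonneg measurableSet_Ioo fun _ _ => by positivity)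
          hbound (by positivity)
    _ = ℓ ^ (1 / p) * C := by
        rw [Real.mul_rpow hℓ (by positivity), ← Real.rpow_mul hC, mul_one_div_cancel hp.ne',
          Real.rpow_one]

lemma integral_abs_le_intervalLpNorm (hℓ : 0 ≤ ℓ) (hp : 1 < p)
    (hf : AEStronglyMeasurable f (volume.restrict (Ioo 0 ℓ)))
    (hfp : IntegrableOn (fun x => |f x| ^ p) (Ioo 0 ℓ)) :
    ∫ x in Ioo 0 ℓ, |f x| ≤ ℓ ^ (1 - 1 / p) * intervalLpNorm ℓ p f := by
  have hpq : p.HolderConjugate (p / (p - 1)) :=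
    (Real.holderConjugate_iff_eq_conjExponent hp).mpr rfl
  have hp0 : ENNReal.ofReal p ≠ 0 := by simp [hpq.pos]
  have hmem : MemLp f (ENNReal.ofReal p) (volume.restrict (Ioo 0 ℓ)) := by
    rw [← memLp_norm_rpow_iff hf hp0 ENNReal.ofReal_ne_top, ENNReal.div_self hp0
      ENNReal.ofReal_ne_top, memLp_one_iff_integrable, ENNReal.toReal_ofReal hpq.nonneg]
    simp only [Real.norm_eq_abs]
    exact hfp
  have := integral_mul_norm_le_Lp_mul_Lq hpq hmem
    (memLp_const (1 : ℝ) : MemLp _ (ENNReal.ofReal (p / (p - 1))) _)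
  simp only [norm_one, mul_one, Real.norm_eq_abs, Real.one_rpow, integral_const, smul_eq_mul,
    measureReal_restrict_apply_univ, Real.volume_real_Ioo_of_le hℓ, sub_zero] at this
  rwa [one_div (p / (p - 1)), ← hpq.one_sub_inv, ← one_div, mul_comm] at this

end IntervalEstimates

namespace IntervalSobolev

variable {ℓ p : ℝ} {u u' : ℝ → ℝ}

lemma abs_sub_le_integral_abs (hu : IntervalSobolev ℓ p u u') {x : ℝ} (hx : x ∈ Icc 0 ℓ) :
    |u x - u 0| ≤ ∫ t in Ioo 0 ℓ, |u' t| := by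
  rw [hu.2.2 x hx, add_sub_cancel_left, ← integral_Ioc_eq_integral_Ioo]
  calc |∫ t in (0 : ℝ)..x, u' t| ≤ ∫ t in (0 : ℝ)..x, |u' t| :=
        intervalIntegral.abs_integral_le_integral_abs hx.1
    _ = ∫ t in Ioc 0 x, |u' t| := intervalIntegral.integral_of_le hx.1
    _ ≤ ∫ t in Ioc 0 ℓ, |u' t| :=
        setIntegral_mono_set ((integrableOn_Ioc_iff_integrableOn_Ioo).mpr hu.1).abs
          (Eventually.of_forall fun _ => abs_nonneg _)
          (Ioc_subset_Ioc_right hx.2).eventuallyLE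

lemma integrableOn (hu : IntervalSobolev ℓ p u u') : IntegrableOn u (Ioo 0 ℓ) := by
  have hprim : ContinuousOn (fun x => u 0 + ∫ t in Ioc 0 x, u' t) (Icc 0 ℓ) :=
    continuousOn_const.add
      (intervalIntegral.continuousOn_primitive ((integrableOn_Icc_iff_integrableOn_Ioo).mpr hu.1))
  refine ((hprim.integrableOn_compact isCompact_Icc).mono_set Ioo_subset_Icc_self).congr_fun
    (fun x hx => ?_) measurableSet_Ioo
  rw [hu.2.2 x (Ioo_subset_Icc_self hx), intervalIntegral.integral_of_le hx.1.le]

end IntervalSobolev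

lemma abs_le_of_sum_setIntegral_eq_zero {α ι : Type*} [MeasurableSpace α] {μ : Measure α}
    [Fintype ι] {s : ι → Set α} {f : ι → α → ℝ} {c M : ℝ} (hs : ∀ i, MeasurableSet (s i))
    (hμs : ∀ i, μ (s i) ≠ ⊤) (hμ : 0 < ∑ i, μ.real (s i)) (hf : ∀ i, IntegrableOn (f i) (s i) μ)
    (hfc : ∀ i, ∀ x ∈ s i, |f i x - c| ≤ M) (hsum : ∑ i, ∫ x in s i, f i x ∂μ = 0) :
    |c| ≤ M := by
  have hlower : (c - M) * ∑ i, μ.real (s i) ≤ 0 := by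
    rw [← hsum, Finset.mul_sum]
    refine Finset.sum_le_sum fun i _ => setIntegral_ge_of_const_le_real (hs i) (hμs i)
      (fun x hx => ?_) (hf i)
    linarith [(abs_le.mp (hfc i x hx)).1]
  have hupper : 0 ≤ (c + M) * ∑ i, μ.real (s i) := by
    rw [← hsum, Finset.mul_sum]
    refine Finset.sum_le_sum fun i _ => ?_
    rw [mul_comm, ← smul_eq_mul, ← setIntegral_const]
    refine setIntegral_mono_on (hf i) (integrableOn_const (hμs i)) (hs i) fun x hx => ?_
    linarith [(abs_le.mp (hfc i x hx)).2]
  exact abs_le.mpr ⟨by nlinarith, by nlinarith⟩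

namespace MetricGraph

noncomputable def derivL1Norm (G : MetricGraph) (u' : G.E → ℝ → ℝ) : ℝ :=
  edgeSum G fun e => ∫ x in Ioo 0 (G.len e), |u' e x|

variable {G : MetricGraph} {p : G.E → ℝ} {u u' : G.E → ℝ → ℝ} {uV : G.V → ℝ}

lemma derivL1Norm_nonneg : 0 ≤ G.derivL1Norm u' :=
  Finset.sum_nonneg fun _ _ => setIntegral_nonneg measurableSet_Ioo fun _ _ => abs_nonneg _

lemma integral_abs_le_derivL1Norm (e : G.E) :
    ∫ x in Ioo 0 (G.len e), |u' e x| ≤ G.derivL1Norm u' :=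
  letI := G.fintypeE
  Finset.single_le_sum (f := fun e => ∫ x in Ioo 0 (G.len e), |u' e x|)
    (fun _ _ => setIntegral_nonneg measurableSet_Ioo fun _ _ => abs_nonneg _) (Finset.mem_univ e)

lemma _root_.GraphSobolev.abs_sub_le_derivL1Norm (hu : GraphSobolev G p u u' uV) (e : G.E) {x : ℝ}
    (hx : x ∈ Icc 0 (G.len e)) : |u e x - uV (G.ι e)| ≤ G.derivL1Norm u' :=
  hu.2.1 e ▸ ((hu.1 e).abs_sub_le_integral_abs hx).trans (integral_abs_le_derivL1Norm e)

lemma _root_.GraphSobolev.abs_vertex_sub_le_of_adj (hu : GraphSobolev G p u u' uV) {a b : G.V}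
    (hab : ∃ e, (G.ι e = a ∧ G.τ e = b) ∨ (G.ι e = b ∧ G.τ e = a)) :
    |uV a - uV b| ≤ G.derivL1Norm u' := by
  obtain ⟨e, hend⟩ := hab
  have hedge : |uV (G.τ e) - uV (G.ι e)| ≤ G.derivL1Norm u' :=
    hu.2.2 e ▸ hu.abs_sub_le_derivL1Norm e ⟨(G.len_pos e).le, le_rfl⟩
  rcases hend with ⟨rfl, rfl⟩ | ⟨rfl, rfl⟩
  · rwa [abs_sub_comm]
  · exact hedge

lemma exists_abs_vertex_sub_le (v w : G.V) :
    ∃ n : ℕ, ∀ u u' uV, GraphSobolev G p u u' uV → |uV v - uV w| ≤ n * G.derivL1Norm u' := by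
  induction G.connected v w with
  | refl => exact ⟨0, fun u u' uV _ => by simp⟩
  | @tail b c _ hbc ih =>
    obtain ⟨n, hn⟩ := ih
    refine ⟨n + 1, fun u u' uV hu => ?_⟩
    calc |uV v - uV c| ≤ |uV v - uV b| + |uV b - uV c| := abs_sub_le _ _ _
      _ ≤ n * G.derivL1Norm u' + G.derivL1Norm u' :=
          add_le_add (hn u u' uV hu) (hu.abs_vertex_sub_le_of_adj hbc)
      _ = (n + 1 : ℕ) * G.derivL1Norm u' := by push_cast; ring

lemma exists_abs_sub_vertex_le (v₀ : G.V) :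
    ∃ C, 0 ≤ C ∧ ∀ u u' uV, GraphSobolev G p u u' uV →
      ∀ e, ∀ x ∈ Icc 0 (G.len e), |u e x - uV v₀| ≤ C * G.derivL1Norm u' := by
  let _ := G.fintypeV
  choose n hn using fun w => exists_abs_vertex_sub_le (p := p) w v₀
  refine ⟨Finset.univ.sup n + 1, by positivity, fun u u' uV hu e x hx => ?_⟩
  have hvertex : |uV (G.ι e) - uV v₀| ≤ Finset.univ.sup n * G.derivL1Norm u' :=
    (hn _ u u' uV hu).trans (mul_le_mul_of_nonneg_right
      (by exact_mod_cast Finset.le_sup (Finset.mem_univ _)) derivL1Norm_nonneg)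
  calc |u e x - uV v₀| ≤ |u e x - uV (G.ι e)| + |uV (G.ι e) - uV v₀| := abs_sub_le _ _ _
    _ ≤ _ := by linarith [hu.abs_sub_le_derivL1Norm e hx]

lemma exists_abs_le_derivL1Norm_of_edgeSum_integral_eq_zero :
    ∃ C, 0 ≤ C ∧ ∀ u u' uV, GraphSobolev G p u u' uV →
      edgeSum G (fun e => ∫ x in Ioo 0 (G.len e), u e x) = 0 →
      ∀ e, ∀ x ∈ Ioo 0 (G.len e), |u e x| ≤ C * G.derivL1Norm u' := by
  let _ := G.fintypeE
  obtain ⟨v₀⟩ := G.nonemptyV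
  obtain ⟨C, hC, hband⟩ := exists_abs_sub_vertex_le (p := p) v₀
  refine ⟨2 * C, by positivity, fun u u' uV hu hmean e x hx => ?_⟩
  have hlen : 0 < ∑ e, volume.real (Ioo 0 (G.len e)) := by
    refine Finset.sum_pos (fun e _ => ?_) ⟨e, Finset.mem_univ e⟩
    rw [Real.volume_real_Ioo_of_le (G.len_pos e).le, sub_zero]
    exact G.len_pos e
  have hvertex : |uV v₀| ≤ C * G.derivL1Norm u' :=
    abs_le_of_sum_setIntegral_eq_zero (fun _ => measurableSet_Ioo)
      (fun _ => measure_Ioo_lt_top.ne) hlen (fun e => (hu.1 e).integrableOn)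
      (fun e x hx => hband u u' uV hu e x (Ioo_subset_Icc_self hx)) hmean
  linarith [abs_sub_abs_le_abs_sub (u e x) (uV v₀), hband u u' uV hu e x (Ioo_subset_Icc_self hx)]

lemma edgeSum_intervalLpNorm_le_of_abs_le (hp : ∀ e, 0 < p e) (hu : GraphSobolev G p u u' uV)
    {C : ℝ} (hC : 0 ≤ C) (hbound : ∀ e, ∀ x ∈ Ioo 0 (G.len e), |u e x| ≤ C) :
    edgeSum G (fun e => intervalLpNorm (G.len e) (p e) (u e))
      ≤ edgeSum G (fun e => G.len e ^ (1 / p e)) * C := by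
  rw [edgeSum, edgeSum, Finset.sum_mul]
  exact Finset.sum_le_sum fun e _ => intervalLpNorm_le_of_abs_le (G.len_pos e).le
    (hp e) (hu.1 e).integrableOn.aestronglyMeasurable hC (hbound e)

lemma derivL1Norm_le (hp : ∀ e, 1 < p e) (hu : GraphSobolev G p u u' uV) :
    G.derivL1Norm u' ≤ edgeSum G (fun e => G.len e ^ (1 - 1 / p e))
      * edgeSum G (fun e => intervalLpNorm (G.len e) (p e) (u' e)) := by
  let _ := G.fintypeE
  rw [derivL1Norm, edgeSum, edgeSum, edgeSum, Finset.mul_sum]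
  refine Finset.sum_le_sum fun e _ => (integral_abs_le_intervalLpNorm (G.len_pos e).le (hp e)
    (hu.1 e).1.aestronglyMeasurable (hu.1 e).2.1).trans ?_
  exact mul_le_mul_of_nonneg_right (Finset.single_le_sum (f := fun e => G.len e ^ (1 - 1 / p e))
    (fun e _ => (Real.rpow_pos_of_pos (G.len_pos e) _).le) (Finset.mem_univ e))
    intervalLpNorm_nonneg

lemma exists_edgeSum_intervalLpNorm_le (hp : ∀ e, 1 < p e) :
    ∃ A, 0 ≤ A ∧ ∀ u u' uV, GraphSobolev G p u u' uV →
      edgeSum G (fun e => ∫ x in Ioo 0 (G.len e), u e x) = 0 →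
      edgeSum G (fun e => intervalLpNorm (G.len e) (p e) (u e))
        ≤ A * edgeSum G (fun e => intervalLpNorm (G.len e) (p e) (u' e)) := by
  obtain ⟨C, hC, hsup⟩ := exists_abs_le_derivL1Norm_of_edgeSum_integral_eq_zero (G := G) (p := p)
  set S := edgeSum G fun e => G.len e ^ (1 / p e)
  set K := edgeSum G fun e => G.len e ^ (1 - 1 / p e)
  have hS : 0 ≤ S := Finset.sum_nonneg fun e _ => (Real.rpow_pos_of_pos (G.len_pos e) _).le
  have hK : 0 ≤ K := Finset.sum_nonneg fun e _ => (Real.rpow_pos_of_pos (G.len_pos e) _).le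
  refine ⟨S * C * K, by positivity, fun u u' uV hu hmean => ?_⟩
  calc edgeSum G (fun e => intervalLpNorm (G.len e) (p e) (u e))
      ≤ S * (C * G.derivL1Norm u') :=
        edgeSum_intervalLpNorm_le_of_abs_le (fun e => zero_lt_one.trans (hp e)) hu
        (mul_nonneg hC derivL1Norm_nonneg) (hsup u u' uV hu hmean)
    _ ≤ S * (C * (K * edgeSum G (fun e => intervalLpNorm (G.len e) (p e) (u' e)))) := by
        gcongr
        exact derivL1Norm_le hp hu
    _ = _ := by ring

end MetricGraph

/-- Poincaré inequality on a compact metric graph. -/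
theorem poincare_inequality_metric_graph
    (G : MetricGraph) (p : G.E → ℝ) (hp : ∀ e, 1 < p e) :
    ∃ lam : ℝ, 0 < lam ∧
      ∀ (u u' : G.E → ℝ → ℝ) (uV : G.V → ℝ), GraphSobolev G p u u' uV →
        edgeSum G (fun e => ∫ x in Ioo (0:ℝ) (G.len e), u e x) = 0 →
        lam * edgeSum G (fun e => (∫ x in Ioo (0:ℝ) (G.len e), |u e x| ^ p e) ^ (1 / p e))
          ≤ edgeSum G (fun e => (∫ x in Ioo (0:ℝ) (G.len e), |u' e x| ^ p e) ^ (1 / p e)) := by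
  obtain ⟨A, hA, hbound⟩ := G.exists_edgeSum_intervalLpNorm_le hp
  refine ⟨(A + 1)⁻¹, by positivity, fun u u' uV hu hmean => ?_⟩
  show (A + 1)⁻¹ * edgeSum G (fun e => intervalLpNorm (G.len e) (p e) (u e))
    ≤ edgeSum G (fun e => intervalLpNorm (G.len e) (p e) (u' e))
  have hnonneg : 0 ≤ edgeSum G (fun e => intervalLpNorm (G.len e) (p e) (u' e)) :=
    Finset.sum_nonneg fun _ _ => intervalLpNorm_nonneg
  rw [inv_mul_le_iff₀ (by positivity)]
  linarith [hbound u u' uV hu hmean]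
end

section
/- Let ℓ > 0, 1 < p < ∞, and let γ : ℝ → ℝ be continuous and nondecreasing with γ(ℝ) = ℝ. Let (u_n)_{n∈ℕ} be functions on [0,ℓ], each absolutely continuous with derivative u_n' ∈ L^p(0,ℓ), and suppose there exists M > 0 such that ∫₀^ℓ |γ(u_n(x))| dx ≤ M for all n ∈ ℕ. Then there exists C > 0 such that ‖u_n‖_{L^p(0,ℓ)} ≤ C ( ‖u_n'‖_{L^p(0,ℓ)} + 1 ) for all n ∈ ℕ. -/
open MeasureTheory Set Filter

/-!
Since `γ` is monotone and onto, `|γ t|` exceeds `M / ℓ` once `|t|` is large, say `|t| > K`.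
The mean of `|γ ∘ uₙ|` over `(0, ℓ)` is at most `M / ℓ`, so `|uₙ|` is at most `K` somewhere, and
hence `|uₙ| ≤ K + ‖uₙ'‖_{L¹} ≤ K + ℓ^{1 - 1/p} ‖uₙ'‖_{Lᵖ}` everywhere by Hölder's inequality.
Integrating the `p`-th power of this uniform bound gives the estimate with
`C = ℓ^{1/p} (K + ℓ^{1 - 1/p})`.
-/

section LpEstimates

variable {α : Type*} [MeasurableSpace α] {μ : Measure α} [IsFiniteMeasure μ] {f : α → ℝ} {p : ℝ}

theorem integral_abs_le_measureReal_rpow_mul (hp : 1 < p) (hf : AEStronglyMeasurable f μ)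
    (hfp : Integrable (fun x => |f x| ^ p) μ) :
    ∫ x, |f x| ∂μ ≤ μ.real univ ^ (1 - 1 / p) * (∫ x, |f x| ^ p ∂μ) ^ (1 / p) := by
  have hpq : p.HolderConjugate p.conjExponent := .conjExponent hp
  have hmem : MemLp f (ENNReal.ofReal p) μ := by
    rw [← integrable_norm_rpow_iff hf (by simpa using hpq.pos) ENNReal.ofReal_ne_top,
      ENNReal.toReal_ofReal hpq.nonneg]
    simpa only [Real.norm_eq_abs] using hfp
  have h := integral_mul_le_Lp_mul_Lq_of_nonneg hpq (.of_forall fun x => abs_nonneg (f x))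
    (.of_forall fun _ => zero_le_one) hmem.abs (memLp_const (1 : ℝ))
  simp only [mul_one, Real.one_rpow, integral_const, smul_eq_mul] at h
  have hexp : 1 - 1 / p = 1 / p.conjExponent := by rw [one_div, one_div, hpq.one_sub_inv]
  rwa [hexp, mul_comm]

theorem integral_abs_rpow_rpow_le (hp : 0 < p) {B : ℝ} (hB : 0 ≤ B) (hfB : ∀ᵐ x ∂μ, |f x| ≤ B) :
    (∫ x, |f x| ^ p ∂μ) ^ (1 / p) ≤ B * μ.real univ ^ (1 / p) := by
  have hint : ∫ x, |f x| ^ p ∂μ ≤ B ^ p * μ.real univ := by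
    calc ∫ x, |f x| ^ p ∂μ ≤ ∫ _, B ^ p ∂μ :=
          integral_mono_of_nonneg (.of_forall fun x => by positivity) (integrable_const _)
            (hfB.mono fun x hx => Real.rpow_le_rpow (abs_nonneg _) hx hp.le)
      _ = B ^ p * μ.real univ := by rw [integral_const, smul_eq_mul, mul_comm]
  calc (∫ x, |f x| ^ p ∂μ) ^ (1 / p) ≤ (B ^ p * μ.real univ) ^ (1 / p) := by gcongr
    _ = B * μ.real univ ^ (1 / p) := by
        rw [Real.mul_rpow (by positivity) measureReal_nonneg, ← Real.rpow_mul hB,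
          mul_one_div_cancel hp.ne', Real.rpow_one]

end LpEstimates

theorem exists_mem_Ioo_le_div_of_setIntegral_le {ℓ M : ℝ} (hℓ : 0 < ℓ) {f : ℝ → ℝ}
    (hf : IntegrableOn f (Ioo 0 ℓ)) (hM : ∫ x in Ioo 0 ℓ, f x ≤ M) :
    ∃ x ∈ Ioo 0 ℓ, f x ≤ M / ℓ := by
  obtain ⟨x, hx, hfx⟩ := exists_le_setAverage (by simp [hℓ]) (by simp) hf
  refine ⟨x, hx, hfx.trans ?_⟩
  rw [setAverage_eq, Real.volume_real_Ioo_of_le hℓ.le, sub_zero, smul_eq_mul, inv_mul_eq_div]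
  gcongr

theorem Monotone.exists_abs_le_of_abs_le_of_surjective {γ : ℝ → ℝ} (hm : Monotone γ)
    (hs : Function.Surjective γ) (c : ℝ) : ∃ K, 0 ≤ K ∧ ∀ t, |γ t| ≤ c → |t| ≤ K := by
  obtain ⟨a, ha⟩ := hs (c + 1)
  obtain ⟨b, hb⟩ := hs (-(c + 1))
  refine ⟨max (max a (-b)) 0, le_max_right _ _, fun t ht => abs_le.2 ⟨?_, ?_⟩⟩
  · have hbt : b ≤ t := le_of_not_gt fun htb => by
      have := hm htb.le; rw [hb] at this; linarith [neg_abs_le (γ t)]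
    linarith [le_max_right a (-b), le_max_left (max a (-b)) 0]
  · have hta : t ≤ a := le_of_not_gt fun hat => by
      have := hm hat.le; rw [ha] at this; linarith [le_abs_self (γ t)]
    linarith [le_max_left a (-b), le_max_left (max a (-b)) 0]

namespace IntervalSobolev

variable {ℓ p : ℝ} {u u' : ℝ → ℝ}

theorem continuousOn (h : IntervalSobolev ℓ p u u') (hℓ : 0 ≤ ℓ) : ContinuousOn u (Icc 0 ℓ) := by
  have hprim := intervalIntegral.continuousOn_primitive_interval (a := 0) (b := ℓ)
    (μ := volume) (f := u')
    (by rw [uIcc_of_le hℓ]; exact (integrableOn_Icc_iff_integrableOn_Ioo).2 h.1)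
  rw [uIcc_of_le hℓ] at hprim
  exact (continuousOn_const.add hprim).congr fun x hx => h.2.2 x hx

theorem abs_sub_le (h : IntervalSobolev ℓ p u u') {x y : ℝ} (hx : x ∈ Icc 0 ℓ)
    (hy : y ∈ Icc 0 ℓ) : |u x - u y| ≤ ∫ t in Ioo 0 ℓ, |u' t| := by
  have hℓ : 0 ≤ ℓ := hx.1.trans hx.2
  rw [← uIcc_of_le hℓ] at hx hy
  have hint : IntervalIntegrable u' volume 0 ℓ :=
    (intervalIntegrable_iff_integrableOn_Ioo_of_le hℓ).2 h.1
  have hdiff : u x - u y = ∫ t in y..x, u' t := by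
    rw [h.2.2 x (uIcc_of_le hℓ ▸ hx), h.2.2 y (uIcc_of_le hℓ ▸ hy),
      ← intervalIntegral.integral_interval_sub_left
        (hint.mono_set (uIcc_subset_uIcc left_mem_uIcc hx))
        (hint.mono_set (uIcc_subset_uIcc left_mem_uIcc hy))]
    ring
  calc |u x - u y| = ‖∫ t in y..x, u' t‖ := by rw [hdiff, Real.norm_eq_abs]
    _ ≤ ∫ t in uIoc y x, ‖u' t‖ := intervalIntegral.norm_integral_le_integral_norm_uIoc
    _ ≤ ∫ t in uIoc 0 ℓ, ‖u' t‖ :=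
        setIntegral_mono_set (hint.def'.norm) (.of_forall fun _ => norm_nonneg _)
          (uIoc_subset_uIoc_of_uIcc_subset_uIcc (uIcc_subset_uIcc hy hx)).eventuallyLE
    _ = ∫ t in Ioo 0 ℓ, |u' t| := by
        simp only [uIoc_of_le hℓ, Real.norm_eq_abs, integral_Ioc_eq_integral_Ioo]

theorem integral_abs_deriv_le (h : IntervalSobolev ℓ p u u') (hℓ : 0 ≤ ℓ) (hp : 1 < p) :
    ∫ t in Ioo 0 ℓ, |u' t| ≤ ℓ ^ (1 - 1 / p) * (∫ t in Ioo 0 ℓ, |u' t| ^ p) ^ (1 / p) := by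
  have := integral_abs_le_measureReal_rpow_mul (μ := volume.restrict (Ioo 0 ℓ)) hp
    h.1.aestronglyMeasurable h.2.1
  rwa [measureReal_restrict_apply_univ, Real.volume_real_Ioo_of_le hℓ, sub_zero] at this

end IntervalSobolev

theorem Lp_bound_from_gamma_L1_bound_general
    (ℓ : ℝ) (hℓ : 0 < ℓ) (p : ℝ) (hp : 1 < p)
    (γ : ℝ → ℝ) (hγc : Continuous γ) (hγm : Monotone γ) (hγs : Function.Surjective γ)
    (u u' : ℕ → ℝ → ℝ)
    (hmem : ∀ n, IntervalSobolev ℓ p (u n) (u' n))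
    (M : ℝ)
    (hbd : ∀ n, (∫ x in Ioo (0:ℝ) ℓ, |γ (u n x)|) ≤ M) :
    ∃ C : ℝ, 0 < C ∧ ∀ n,
      (∫ x in Ioo (0:ℝ) ℓ, |u n x| ^ p) ^ (1 / p)
        ≤ C * ((∫ x in Ioo (0:ℝ) ℓ, |u' n x| ^ p) ^ (1 / p) + 1) := by
  obtain ⟨K, hK0, hK⟩ := hγm.exists_abs_le_of_abs_le_of_surjective hγs (M / ℓ)
  refine ⟨ℓ ^ (1 / p) * (K + ℓ ^ (1 - 1 / p)), by positivity, fun n => ?_⟩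
  have hu := hmem n
  have hcont := hu.continuousOn hℓ.le
  obtain ⟨x₀, hx₀, hγx₀⟩ := exists_mem_Ioo_le_div_of_setIntegral_le hℓ
    (((hγc.comp_continuousOn hcont).abs.integrableOn_Icc).mono_set Ioo_subset_Icc_self) (hbd n)
  set D := (∫ x in Ioo (0:ℝ) ℓ, |u' n x| ^ p) ^ (1 / p)
  have hsup : ∀ x ∈ Ioo 0 ℓ, |u n x| ≤ K + ℓ ^ (1 - 1 / p) * D := fun x hx =>
    calc |u n x| ≤ |u n x₀| + |u n x - u n x₀| := by
          linarith [abs_sub_abs_le_abs_sub (u n x) (u n x₀)]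
      _ ≤ K + ∫ t in Ioo 0 ℓ, |u' n t| :=
        add_le_add (hK _ hγx₀) (hu.abs_sub_le (Ioo_subset_Icc_self hx) (Ioo_subset_Icc_self hx₀))
      _ ≤ K + ℓ ^ (1 - 1 / p) * D := by gcongr; exact hu.integral_abs_deriv_le hℓ.le hp
  have hL := integral_abs_rpow_rpow_le (μ := volume.restrict (Ioo 0 ℓ)) (p := p) (by linarith)
    (by positivity) ((ae_restrict_iff' measurableSet_Ioo).2 (.of_forall hsup))
  rw [measureReal_restrict_apply_univ, Real.volume_real_Ioo_of_le hℓ.le, sub_zero] at hL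
  refine hL.trans ?_
  have hD : 0 ≤ D := by positivity
  nlinarith [mul_nonneg (mul_nonneg hK0 hD) (Real.rpow_nonneg hℓ.le (1 / p)),
    Real.rpow_nonneg hℓ.le (1 / p), Real.rpow_nonneg hℓ.le (1 - 1 / p)]

/-- if γ is continuous, nondecreasing and surjective and the integrals
∫₀^ℓ |γ(u_n)| are uniformly bounded, then ‖u_n‖_{L^p} ≤ C(‖u_n'‖_{L^p} + 1) uniformly. -/
theorem Lp_bound_from_gamma_L1_bound
    (ℓ : ℝ) (hℓ : 0 < ℓ) (p : ℝ) (hp : 1 < p)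
    (γ : ℝ → ℝ) (hγc : Continuous γ) (hγm : Monotone γ) (hγs : Function.Surjective γ)
    (u u' : ℕ → ℝ → ℝ)
    (hmem : ∀ n, IntervalSobolev ℓ p (u n) (u' n))
    (M : ℝ) (hM : 0 < M)
    (hbd : ∀ n, (∫ x in Ioo (0:ℝ) ℓ, |γ (u n x)|) ≤ M) :
    ∃ C : ℝ, 0 < C ∧ ∀ n,
      (∫ x in Ioo (0:ℝ) ℓ, |u n x| ^ p) ^ (1 / p)
        ≤ C * ((∫ x in Ioo (0:ℝ) ℓ, |u' n x| ^ p) ^ (1 / p) + 1) :=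
  Lp_bound_from_gamma_L1_bound_general ℓ hℓ p hp γ hγc hγm hγs u u' hmem M hbd
end

section
/- Let ℓ > 0, 1 < p < ∞, γ : ℝ → ℝ continuous, strictly increasing and surjective with γ(0) = 0, f ∈ L^1(0,ℓ) and a, b ∈ ℝ. For δ, ε ∈ ℝ, let v_{δ,ε} = γ ∘ u_{δ,ε} denote the weak solution of (P^{γ,f}_{p,a−δ,b+ε}), with u_{δ,ε} its C¹ representative. If 0 ≤ δ < ε, or 0 < δ ≤ ε, then u_{δ,ε}(ℓ) > u_{0,0}(ℓ). -/
open MeasureTheory Set Filter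

open Topology

/-!
Testing the weak formulation against `c + ∫₀ˣ ψ` with `ψ` continuous, and integrating the
source term by parts, shows (du Bois-Reymond) that the flux `ρ_p(u')` is a primitive of `v - f`
with `ρ_p(u'(0)) = -a` and `ρ_p(u'(ℓ)) = b`. For `u₀ = u_{0,0}` and `u₁ = u_{δ,ε}` the flux
difference `D` therefore starts at `δ`, ends at `ε > 0` and has derivative `γ(u₁) - γ(u₀)`.
If `u₁(ℓ) ≤ u₀(ℓ)`, let `x₀` be the last point where `D ≤ 0` (or `0` if there is none). On
`(x₀, ℓ]` we have `u₁' > u₀'`, hence `u₁ < u₀` on `[x₀, ℓ)`, so `D` strictly decreases from `x₀`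
to `ℓ`, contradicting `D(x₀) ≤ max 0 δ ≤ ε = D(ℓ)`.
-/

lemma rho_neg (p r : ℝ) : rho p (-r) = -rho p r := by simp [rho]

lemma rho_of_nonneg {p r : ℝ} (hp : 1 < p) (hr : 0 ≤ r) : rho p r = r ^ (p - 1) := by
  rcases hr.eq_or_lt with rfl | hr
  · simp [rho, Real.zero_rpow (by linarith : p - 1 ≠ 0)]
  · rw [rho, abs_of_pos hr, show p - 1 = p - 2 + 1 by ring, Real.rpow_add_one hr.ne']

lemma abs_rho (p r : ℝ) : |rho p r| = rho p |r| := by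
  rw [rho, rho, abs_mul, abs_abs, abs_of_nonneg (Real.rpow_nonneg (abs_nonneg r) _)]

lemma continuous_rho {p : ℝ} (hp : 1 < p) : Continuous (rho p) := by
  refine continuous_iff_continuousAt.2 fun r => ?_
  rcases eq_or_ne r 0 with rfl | hr
  · have hpow : Tendsto (fun s : ℝ => |s| ^ (p - 1)) (𝓝 0) (𝓝 0) := by
      simpa [Real.zero_rpow (by linarith : p - 1 ≠ 0)] using
        (continuous_abs.rpow_const (p := p - 1) fun _ => Or.inr (by linarith)).tendsto 0
    simpa [ContinuousAt, rho] using squeeze_zero_norm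
      (fun s => by rw [Real.norm_eq_abs, abs_rho, rho_of_nonneg hp (abs_nonneg s)]) hpow
  · exact (continuous_abs.continuousAt.rpow_const (Or.inl (abs_ne_zero.2 hr))).mul
      continuousAt_id

lemma strictMono_rho {p : ℝ} (hp : 1 < p) : StrictMono (rho p) :=
  strictMono_of_odd_strictMonoOn_nonneg (rho_neg p) fun r hr s hs hrs => by
    rw [rho_of_nonneg hp hr, rho_of_nonneg hp hs]
    exact Real.rpow_lt_rpow hr hrs (by linarith)

lemma intervalSobolev_const_add_primitive {ℓ p : ℝ} (hp : 0 ≤ p) {ψ : ℝ → ℝ}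
    (hψ : ContinuousOn ψ (Icc 0 ℓ)) (c : ℝ) :
    IntervalSobolev ℓ p (fun x => c + ∫ t in (0:ℝ)..x, ψ t) ψ :=
  ⟨hψ.integrableOn_Icc.mono_set Ioo_subset_Icc_self,
    (hψ.abs.rpow_const fun _ _ => Or.inr hp).integrableOn_Icc.mono_set Ioo_subset_Icc_self,
    fun x _ => by simp⟩

lemma sub_eq_integral_of_eq_add_integral {a b x y : ℝ} {F F' : ℝ → ℝ}
    (hF' : IntervalIntegrable F' volume a b)
    (hF : ∀ x ∈ Icc a b, F x = F a + ∫ t in a..x, F' t)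
    (hx : x ∈ Icc a b) (hy : y ∈ Icc a b) :
    F y - F x = ∫ t in x..y, F' t := by
  have hsub : ∀ z ∈ Icc a b, IntervalIntegrable F' volume a z := fun z hz =>
    hF'.mono_set (uIcc_subset_uIcc left_mem_uIcc (Icc_subset_uIcc hz))
  rw [hF y hy, hF x hx, add_sub_add_left_eq_sub,
    intervalIntegral.integral_interval_sub_left (hsub y hy) (hsub x hx)]

lemma sub_lt_sub_of_deriv_lt {a b x : ℝ} {u₀ u₁ u₀' u₁' : ℝ → ℝ}
    (hu₀' : IntervalIntegrable u₀' volume a b) (hu₁' : IntervalIntegrable u₁' volume a b)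
    (hu₀ : ∀ x ∈ Icc a b, u₀ x = u₀ a + ∫ t in a..x, u₀' t)
    (hu₁ : ∀ x ∈ Icc a b, u₁ x = u₁ a + ∫ t in a..x, u₁' t)
    (hx : x ∈ Ico a b) (hlt : ∀ t ∈ Ioo x b, u₀' t < u₁' t) :
    u₀ b - u₀ x < u₁ b - u₁ x := by
  have hxI : x ∈ Icc a b := Ico_subset_Icc_self hx
  have hbI : b ∈ Icc a b := right_mem_Icc.2 (hx.1.trans hx.2.le)
  have hsub : uIcc x b ⊆ uIcc a b := uIcc_subset_uIcc (Icc_subset_uIcc hxI) right_mem_uIcc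
  rw [sub_eq_integral_of_eq_add_integral hu₀' hu₀ hxI hbI,
    sub_eq_integral_of_eq_add_integral hu₁' hu₁ hxI hbI, ← sub_pos,
    ← intervalIntegral.integral_sub (hu₁'.mono_set hsub) (hu₀'.mono_set hsub)]
  exact intervalIntegral.intervalIntegral_pos_of_pos_on
    ((hu₁'.mono_set hsub).sub (hu₀'.mono_set hsub)) (fun t ht => sub_pos.2 (hlt t ht)) hx.2

lemma intervalIntegral.integral_mul_primitive {g ψ : ℝ → ℝ} {a b : ℝ}
    (hg : IntervalIntegrable g volume a b) (hψ : IntervalIntegrable ψ volume a b) :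
    ∫ x in a..b, g x * ∫ t in a..x, ψ t
      = (∫ x in a..b, g x) * (∫ x in a..b, ψ x) - ∫ x in a..b, (∫ t in a..x, g t) * ψ x := by
  let G := fun x => ∫ t in a..x, g t
  let Ψ := fun x => ∫ t in a..x, ψ t
  have deriv_primitive : ∀ {h : ℝ → ℝ}, IntervalIntegrable h volume a b →
      ∀ᵐ x, x ∈ uIoc a b → deriv (fun y => ∫ t in a..y, h t) x = h x := fun hh => by
    filter_upwards [hh.ae_hasDerivAt_integral] with x hx hxab
    exact (hx (uIoc_subset_uIcc hxab) a left_mem_uIcc).deriv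
  have hG : ∫ x in a..b, deriv G x * Ψ x = ∫ x in a..b, g x * Ψ x :=
    intervalIntegral.integral_congr_ae <| by
      filter_upwards [deriv_primitive hg] with x hx hxab using by rw [hx hxab]
  have hΨ : ∫ x in a..b, G x * deriv Ψ x = ∫ x in a..b, G x * ψ x :=
    intervalIntegral.integral_congr_ae <| by
      filter_upwards [deriv_primitive hψ] with x hx hxab using by rw [hx hxab]
  have hibp := AbsolutelyContinuousOnInterval.integral_mul_deriv_eq_deriv_mul
    (hg.absolutelyContinuousOnInterval_intervalIntegral left_mem_uIcc)
    (hψ.absolutelyContinuousOnInterval_intervalIntegral left_mem_uIcc)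
  simp only [G, Ψ, intervalIntegral.integral_same, zero_mul, sub_zero] at hibp hG hΨ ⊢
  linarith

lemma eqOn_const_of_forall_integral_mul_eq {K : ℝ → ℝ} {a b β : ℝ} (hab : a < b)
    (hK : ContinuousOn K (Icc a b))
    (h : ∀ ψ : ℝ → ℝ, ContinuousOn ψ (Icc a b) →
      ∫ x in a..b, K x * ψ x = β * ∫ x in a..b, ψ x) :
    EqOn K (fun _ => β) (Icc a b) := by
  have hKβ : ContinuousOn (fun x => K x - β) (Icc a b) := hK.sub continuousOn_const
  have hint : ∀ {F : ℝ → ℝ}, ContinuousOn F (Icc a b) → IntervalIntegrable F volume a b :=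
    fun hF => hF.intervalIntegrable_of_Icc hab.le
  have hsq : ∫ x in a..b, (K x - β) ^ 2 = 0 := by
    have hmul := h _ hKβ
    calc ∫ x in a..b, (K x - β) ^ 2
        = (∫ x in a..b, K x * (K x - β)) - β * ∫ x in a..b, (K x - β) := by
          rw [← intervalIntegral.integral_const_mul, ← intervalIntegral.integral_sub
            (hint (hK.mul hKβ) : IntervalIntegrable (fun x => K x * (K x - β)) volume a b)
            ((hint hKβ).const_mul β)]
          congr 1; ext x; ring
      _ = 0 := by rw [hmul, sub_self]
  have hae : (fun x => (K x - β) ^ 2) =ᵐ[volume.restrict (Icc a b)] 0 := by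
    rw [← Measure.restrict_congr_set Ioc_ae_eq_Icc]
    exact (intervalIntegral.integral_eq_zero_iff_of_le_of_nonneg_ae hab.le
      (ae_of_all _ fun x => sq_nonneg _) (hint (hKβ.pow 2))).1 hsq
  intro x hx
  have := Measure.eqOn_Icc_of_ae_eq volume hab.ne hae (hKβ.pow 2) continuousOn_const hx
  simpa [sub_eq_zero] using this

lemma SolvesNeumann.integral_rho_sub_primitive_mul {ℓ p a b : ℝ} {γ f v u u' ψ : ℝ → ℝ}
    (hs : SolvesNeumann ℓ p γ f a b v u u') (hℓ : 0 ≤ ℓ) (hp : 1 < p)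
    (hf : IntegrableOn f (Ioo 0 ℓ) volume) (hu' : ContinuousOn u' (Icc 0 ℓ))
    (hψ : ContinuousOn ψ (Icc 0 ℓ)) (c : ℝ) :
    ∫ x in 0..ℓ, (rho p (u' x) - ∫ t in 0..x, (v t - f t)) * ψ x
      = a * c + (b - ∫ x in 0..ℓ, (v x - f x)) * (c + ∫ x in 0..ℓ, ψ x) := by
  have hweak := hs.2.2.2 _ _ (intervalSobolev_const_add_primitive (by linarith) hψ c)
  simp only [← integral_Ioc_eq_integral_Ioo, ← intervalIntegral.integral_of_le hℓ,
    intervalIntegral.integral_same, add_zero] at hweak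
  rw [← uIcc_of_le hℓ] at hψ hu'
  have interval : ∀ {F : ℝ → ℝ}, IntegrableOn F (Ioo 0 ℓ) → IntervalIntegrable F volume 0 ℓ :=
    (intervalIntegrable_iff_integrableOn_Ioo_of_le hℓ).2
  have hv := interval hs.1
  have hg := hv.sub (interval hf)
  have hψi : IntervalIntegrable ψ volume 0 ℓ := hψ.intervalIntegrable
  have hφ : ContinuousOn (fun x => c + ∫ t in (0:ℝ)..x, ψ t) (uIcc 0 ℓ) :=
    continuousOn_const.add (intervalIntegral.continuousOn_primitive_interval' hψi left_mem_uIcc)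
  have hflux : ∫ x in 0..ℓ, (rho p (u' x) - ∫ t in 0..x, (v t - f t)) * ψ x
      = (∫ x in 0..ℓ, rho p (u' x) * ψ x)
        - ∫ x in 0..ℓ, (∫ t in 0..x, (v t - f t)) * ψ x := by
    rw [← intervalIntegral.integral_sub
      (hψi.continuousOn_mul ((continuous_rho hp).comp_continuousOn hu') :
        IntervalIntegrable (fun x => rho p (u' x) * ψ x) volume 0 ℓ)
      (hψi.continuousOn_mul (intervalIntegral.continuousOn_primitive_interval' hg left_mem_uIcc))]
    congr 1; ext x; ring
  have hsource : (∫ x in 0..ℓ, v x * (c + ∫ t in 0..x, ψ t))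
        - ∫ x in 0..ℓ, f x * (c + ∫ t in 0..x, ψ t)
      = c * (∫ x in 0..ℓ, (v x - f x)) + ∫ x in 0..ℓ, (v x - f x) * ∫ t in 0..x, ψ t := by
    rw [← intervalIntegral.integral_sub (hv.mul_continuousOn hφ)
      ((interval hf).mul_continuousOn hφ), ← intervalIntegral.integral_const_mul,
      ← intervalIntegral.integral_add (hg.const_mul c)
        (hg.mul_continuousOn (intervalIntegral.continuousOn_primitive_interval' hψi left_mem_uIcc))]
    congr 1; ext x; ring
  rw [intervalIntegral.integral_mul_primitive hg hψi] at hsource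
  rw [hflux]
  linear_combination hweak - hsource

lemma SolvesNeumann.rho_eq_add_integral {ℓ p a b : ℝ} {γ f v u u' : ℝ → ℝ}
    (hs : SolvesNeumann ℓ p γ f a b v u u') (hℓ : 0 < ℓ) (hp : 1 < p)
    (hf : IntegrableOn f (Ioo 0 ℓ) volume) (hu' : ContinuousOn u' (Icc 0 ℓ)) :
    (∀ x ∈ Icc 0 ℓ, rho p (u' x) = rho p (u' 0) + ∫ t in 0..x, (v t - f t))
      ∧ rho p (u' 0) = -a ∧ rho p (u' ℓ) = b := by
  have htotal : ∫ x in 0..ℓ, (v x - f x) = a + b := by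
    have := hs.integral_rho_sub_primitive_mul hℓ.le hp hf hu' (continuousOn_const (c := 0)) 1
    simp only [mul_zero, intervalIntegral.integral_zero, add_zero, mul_one] at this
    linarith
  have hg : IntervalIntegrable (fun t => v t - f t) volume 0 ℓ :=
    (intervalIntegrable_iff_integrableOn_Ioo_of_le hℓ.le).2 (hs.1.sub hf)
  have hK : ContinuousOn (fun x => rho p (u' x) - ∫ t in 0..x, (v t - f t)) (Icc 0 ℓ) :=
    ((continuous_rho hp).comp_continuousOn hu').sub <| by
      simpa [uIcc_of_le hℓ.le] using
        intervalIntegral.continuousOn_primitive_interval' hg left_mem_uIcc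
  have hconst := eqOn_const_of_forall_integral_mul_eq (β := -a) hℓ hK fun ψ hψ => by
    rw [hs.integral_rho_sub_primitive_mul hℓ.le hp hf hu' hψ 0, htotal]; ring
  have h0 := hconst (left_mem_Icc.2 hℓ.le)
  have hℓ' := hconst (right_mem_Icc.2 hℓ.le)
  simp only [intervalIntegral.integral_same, sub_zero] at h0 hℓ'
  refine ⟨fun x hx => ?_, h0, by linarith⟩
  have := hconst hx
  simp only at this
  linarith

lemma exists_last_nonpos {D : ℝ → ℝ} {a b : ℝ} (hab : a < b) (hD : ContinuousOn D (Icc a b))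
    (hb : 0 < D b) : ∃ x₀ ∈ Ico a b, (x₀ = a ∨ D x₀ ≤ 0) ∧ ∀ t ∈ Ioc x₀ b, 0 < D t := by
  set T := {a} ∪ (Icc a b ∩ D ⁻¹' Iic 0)
  have hT : IsClosed T :=
    isClosed_singleton.union (hD.preimage_isClosed_of_isClosed isClosed_Icc isClosed_Iic)
  have haT : a ∈ T := Or.inl rfl
  have hbdd : BddAbove T := ⟨b, by rintro x (rfl | ⟨hx, -⟩); exacts [hab.le, hx.2]⟩
  have hmem := hT.csSup_mem ⟨a, haT⟩ hbdd
  have hsup_le : sSup T ≤ b := csSup_le ⟨a, haT⟩ (by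
    rintro x (rfl | ⟨hx, -⟩); exacts [hab.le, hx.2])
  refine ⟨sSup T, ⟨le_csSup hbdd haT, hsup_le.lt_of_ne fun h => ?_⟩, ?_, ?_⟩
  · rcases h ▸ hmem with h | ⟨-, h⟩
    exacts [hab.ne' h, (not_le.2 hb) h]
  · rcases hmem with h | ⟨-, h⟩
    exacts [Or.inl h, Or.inr h]
  · intro t ht
    by_contra! hle
    exact (le_csSup hbdd (Or.inr ⟨⟨(le_csSup hbdd haT).trans ht.1.le, ht.2⟩, hle⟩)).not_gt ht.1

theorem lt_of_flux_sub_eq {ℓ δ ε : ℝ} (hℓ : 0 < ℓ) {ρ γ u₀ u₁ u₀' u₁' : ℝ → ℝ}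
    (hρ : StrictMono ρ) (hγ : StrictMono γ)
    (hu₀' : IntervalIntegrable u₀' volume 0 ℓ) (hu₁' : IntervalIntegrable u₁' volume 0 ℓ)
    (hu₀ : ∀ x ∈ Icc 0 ℓ, u₀ x = u₀ 0 + ∫ t in 0..x, u₀' t)
    (hu₁ : ∀ x ∈ Icc 0 ℓ, u₁ x = u₁ 0 + ∫ t in 0..x, u₁' t)
    (hγu : IntervalIntegrable (fun t => γ (u₁ t) - γ (u₀ t)) volume 0 ℓ)
    (hflux : ∀ x ∈ Icc 0 ℓ, ρ (u₁' x) - ρ (u₀' x) = δ + ∫ t in 0..x, (γ (u₁ t) - γ (u₀ t)))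
    (hfluxℓ : ρ (u₁' ℓ) - ρ (u₀' ℓ) = ε) (hε : 0 < ε) (hδε : δ ≤ ε) :
    u₀ ℓ < u₁ ℓ := by
  set D := fun x => ρ (u₁' x) - ρ (u₀' x)
  have hD0 : D 0 = δ := by simpa using hflux 0 (left_mem_Icc.2 hℓ.le)
  have hD : ∀ x ∈ Icc 0 ℓ, D x = D 0 + ∫ t in 0..x, (γ (u₁ t) - γ (u₀ t)) := hD0 ▸ hflux
  have hDc : ContinuousOn D (Icc 0 ℓ) := by
    refine (continuousOn_const.add ?_).congr hD
    simpa [uIcc_of_le hℓ.le] using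
      intervalIntegral.continuousOn_primitive_interval' hγu left_mem_uIcc
  have hDℓ : D ℓ = ε := hfluxℓ
  obtain ⟨x₀, hx₀, hDx₀, hpos⟩ := exists_last_nonpos hℓ hDc (hDℓ ▸ hε)
  by_contra! hle
  have hbelow : ∀ x ∈ Ico x₀ ℓ, γ (u₁ x) < γ (u₀ x) := fun x hx => hγ <| by
    have := sub_lt_sub_of_deriv_lt hu₀' hu₁' hu₀ hu₁ ⟨hx₀.1.trans hx.1, hx.2⟩
      fun t ht => hρ.lt_iff_lt.1 (sub_pos.1 (hpos t ⟨hx.1.trans_lt ht.1, ht.2.le⟩))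
    linarith
  have hdrop : D ℓ - D x₀ < 0 := by
    have hsub : uIcc x₀ ℓ ⊆ uIcc 0 ℓ :=
      uIcc_subset_uIcc (Icc_subset_uIcc (Ico_subset_Icc_self hx₀)) right_mem_uIcc
    have := intervalIntegral.intervalIntegral_pos_of_pos_on
      (f := fun t => -(γ (u₁ t) - γ (u₀ t))) (hγu.mono_set hsub).neg
      (fun t ht => neg_pos.2 (sub_neg.2 (hbelow t ⟨ht.1.le, ht.2⟩))) hx₀.2
    rw [intervalIntegral.integral_neg, neg_pos] at this
    rwa [sub_eq_integral_of_eq_add_integral hγu hD (Ico_subset_Icc_self hx₀)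
      (right_mem_Icc.2 hℓ.le)]
  rcases hDx₀ with rfl | hDx₀ <;> linarith

theorem neumann_perturbed_two_parameters_general
    (ℓ : ℝ) (hℓ : 0 < ℓ) (p : ℝ) (hp : 1 < p)
    (γ : ℝ → ℝ) (hγm : StrictMono γ)
    (f : ℝ → ℝ) (hf : IntegrableOn f (Ioo 0 ℓ) volume) (a b : ℝ)
    (u u' : ℝ → ℝ → ℝ → ℝ)
    (hsol : ∀ δ ε : ℝ,
      SolvesNeumann ℓ p γ f (a - δ) (b + ε) (fun x => γ (u δ ε x)) (u δ ε) (u' δ ε))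
    (hC1 : ∀ δ ε : ℝ, ContinuousOn (u' δ ε) (Icc 0 ℓ)) :
    ∀ δ ε : ℝ, ((0 ≤ δ ∧ δ < ε) ∨ (0 < δ ∧ δ ≤ ε)) → u 0 0 ℓ < u δ ε ℓ := by
  intro δ ε hδε
  obtain ⟨hε, hδ⟩ : 0 < ε ∧ δ ≤ ε := by
    rcases hδε with ⟨_, h⟩ | ⟨_, h⟩ <;> constructor <;> linarith
  have interval : ∀ {F : ℝ → ℝ}, IntegrableOn F (Ioo 0 ℓ) → IntervalIntegrable F volume 0 ℓ :=
    (intervalIntegrable_iff_integrableOn_Ioo_of_le hℓ.le).2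
  have hg : ∀ δ ε, IntervalIntegrable (fun t => γ (u δ ε t) - f t) volume 0 ℓ :=
    fun δ ε => interval ((hsol δ ε).1.sub hf)
  obtain ⟨flux₀, flux₀0, flux₀ℓ⟩ := (hsol 0 0).rho_eq_add_integral hℓ hp hf (hC1 0 0)
  obtain ⟨flux₁, flux₁0, flux₁ℓ⟩ := (hsol δ ε).rho_eq_add_integral hℓ hp hf (hC1 δ ε)
  have hflux : ∀ x ∈ Icc 0 ℓ, rho p (u' δ ε x) - rho p (u' 0 0 x)
      = δ + ∫ t in 0..x, (γ (u δ ε t) - γ (u 0 0 t)) := fun x hx => by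
    have hsub : uIcc 0 x ⊆ uIcc 0 ℓ := uIcc_subset_uIcc left_mem_uIcc (Icc_subset_uIcc hx)
    have hsplit : ∫ t in 0..x, (γ (u δ ε t) - γ (u 0 0 t))
        = (∫ t in 0..x, (γ (u δ ε t) - f t)) - ∫ t in 0..x, (γ (u 0 0 t) - f t) := by
      rw [← intervalIntegral.integral_sub ((hg δ ε).mono_set hsub) ((hg 0 0).mono_set hsub)]
      simp only [sub_sub_sub_cancel_right]
    rw [hsplit, flux₁ x hx, flux₀ x hx, flux₁0, flux₀0]
    ring
  exact lt_of_flux_sub_eq hℓ (strictMono_rho hp) hγm (interval (hsol 0 0).2.1.1)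
    (interval (hsol δ ε).2.1.1) (hsol 0 0).2.1.2.2 (hsol δ ε).2.1.2.2
    (interval ((hsol δ ε).1.sub (hsol 0 0).1)) hflux (by rw [flux₁ℓ, flux₀ℓ]; ring) hε hδ

/-- Remark 3.2: if v_{δ,ε} = γ∘u_{δ,ε} solves (P^{γ,f}_{p,a−δ,b+ε}) and
0 ≤ δ < ε or 0 < δ ≤ ε, then u_{δ,ε}(ℓ) > u_{0,0}(ℓ). -/
theorem neumann_perturbed_two_parameters
    (ℓ : ℝ) (hℓ : 0 < ℓ) (p : ℝ) (hp : 1 < p)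
    (γ : ℝ → ℝ) (hγc : Continuous γ) (hγm : StrictMono γ)
    (hγs : Function.Surjective γ) (hγ0 : γ 0 = 0)
    (f : ℝ → ℝ) (hf : IntegrableOn f (Ioo 0 ℓ) volume) (a b : ℝ)
    (u u' : ℝ → ℝ → ℝ → ℝ)
    (hsol : ∀ δ ε : ℝ,
      SolvesNeumann ℓ p γ f (a - δ) (b + ε) (fun x => γ (u δ ε x)) (u δ ε) (u' δ ε))
    (hC1 : ∀ δ ε : ℝ, ContinuousOn (u' δ ε) (Icc 0 ℓ)) :
    ∀ δ ε : ℝ, ((0 ≤ δ ∧ δ < ε) ∨ (0 < δ ∧ δ ≤ ε)) → u 0 0 ℓ < u δ ε ℓ :=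
  neumann_perturbed_two_parameters_general ℓ hℓ p hp γ hγm f hf a b u u' hsol hC1
end
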